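/- Let μ_ρ be the probability measure on ℝ with cumulative distribution F(t) = (1/2π) ∫_0^{2π} 1_{(-∞,t]}(1 + ρ² - 2ρ cos x) dx, where ρ ∈ (-1,1), ρ ≠ 0. Then for any z > (1+|ρ|)², the Stieltjes transform G(z) = ∫ 1/(z - x) dμ_ρ(x) equals 1/sqrt((z - (1-|ρ|)²)(z - (1+|ρ|)²)). -/

import Mathlib

open Real MeasureTheory

/-- The measure `μ_ρ`: pushforward of the uniform probability measure on `[0, 2π]`
under `x ↦ 1 + ρ² - 2ρ cos x`. -/
noncomputable def muRho (ρ : ℝ) : Measure ℝ :=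
  Measure.map (fun x => 1 + ρ ^ 2 - 2 * ρ * Real.cos x)
    ((ENNReal.ofReal (2 * π))⁻¹ • volume.restrict (Set.Icc (0:ℝ) (2 * π)))

/-- For `z > (1+|ρ|)²`, the Stieltjes transform of `μ_ρ` equals
`1/√((z-(1-|ρ|)²)(z-(1+|ρ|)²))`. -/

lemma key_integral (a b : ℝ) (hb : b ≠ 0) (hab : |b| < a) :
    ∫ x in (0:ℝ)..(2*π), (a + b * Real.cos x)⁻¹ = 2 * π / Real.sqrt (a^2 - b^2) := by
  have hb0 : 0 < |b| := abs_pos.mpr hb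
  have hbsq : 0 < b^2 := by positivity
  have ha : 0 < a := lt_trans hb0 hab
  have hab2 : b^2 < a^2 := by nlinarith [sq_abs b]
  set c := Real.sqrt (a^2 - b^2) with hc_def
  have hc2 : c^2 = a^2 - b^2 := Real.sq_sqrt (by nlinarith)
  have hc : 0 < c := Real.sqrt_pos.mpr (by nlinarith)
  have hca : c < a := by nlinarith
  have hac : a - |b| < c := by nlinarith [sq_abs b]
  obtain ⟨r, hbr⟩ : ∃ r : ℝ, b * r = c - a := ⟨(c - a)/b, by field_simp⟩
  have hr1 : |r| < 1 := by
    have h := congrArg abs hbr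
    rw [abs_mul, abs_of_neg (by linarith : c - a < 0)] at h
    nlinarith [abs_nonneg r]
  have hden : ∀ x : ℝ, 0 < 1 - r * Real.cos x := by
    intro x
    have h1 : |r * Real.cos x| < 1 := by
      calc |r * Real.cos x| = |r| * |Real.cos x| := abs_mul _ _
        _ ≤ |r| * 1 := by nlinarith [abs_cos_le_one x, abs_nonneg r]
        _ < 1 := by nlinarith
    nlinarith [abs_lt.mp h1]
  have hD : ∀ x : ℝ, 0 < 1 - 2*r*Real.cos x + r^2 := by
    intro x
    nlinarith [hden x, sq_nonneg (r - Real.cos x), Real.sin_sq_add_cos_sq x, sq_nonneg (Real.sin x * r)]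
  have hpos : ∀ x : ℝ, 0 < a + b * Real.cos x := by
    intro x
    have h1 : |b * Real.cos x| ≤ |b| := by
      rw [abs_mul]; nlinarith [abs_cos_le_one x, abs_nonneg b]
    nlinarith [abs_lt.mp (lt_of_le_of_lt h1 hab)]
  have key : ∀ x : ℝ, (a + b * Real.cos x) * (1 - r^2) = c * (1 - 2*r*Real.cos x + r^2) := by
    intro x
    apply mul_left_cancel₀ (pow_ne_zero 2 hb)
    linear_combination (a - c + b * Real.cos x) * hc2 + ((a + c) * (b * Real.cos x - b * r - c + a) - b^2 * Real.cos x * r) * hbr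
  have hF : ∀ x : ℝ, HasDerivAt (fun y => (y + 2 * Real.arctan (r * Real.sin y / (1 - r * Real.cos y))) / c)
      ((a + b * Real.cos x)⁻¹) x := by
    intro x
    have h1 : HasDerivAt (fun y => r * Real.sin y) (r * Real.cos x) x :=
      (Real.hasDerivAt_sin x).const_mul r
    have h2 : HasDerivAt (fun y => 1 - r * Real.cos y) (r * Real.sin x) x := by
      have := ((Real.hasDerivAt_cos x).const_mul r).const_sub 1
      exact this.congr_deriv (by ring)
    have h3 : HasDerivAt (fun y => r * Real.sin y / (1 - r * Real.cos y))
        ((r * Real.cos x * (1 - r * Real.cos x) - r * Real.sin x * (r * Real.sin x)) / (1 - r * Real.cos x)^2) x :=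
      h1.div h2 (ne_of_gt (hden x))
    have h4 : HasDerivAt (fun y => Real.arctan (r * Real.sin y / (1 - r * Real.cos y)))
        (1 / (1 + (r * Real.sin x / (1 - r * Real.cos x))^2) *
          ((r * Real.cos x * (1 - r * Real.cos x) - r * Real.sin x * (r * Real.sin x)) / (1 - r * Real.cos x)^2)) x :=
      by have := (Real.hasDerivAt_arctan (r * Real.sin x / (1 - r * Real.cos x))).comp x h3; exact this
    have h5 : HasDerivAt (fun y => (y + 2 * Real.arctan (r * Real.sin y / (1 - r * Real.cos y))) / c)
        ((1 + 2 * (1 / (1 + (r * Real.sin x / (1 - r * Real.cos x))^2) *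
          ((r * Real.cos x * (1 - r * Real.cos x) - r * Real.sin x * (r * Real.sin x)) / (1 - r * Real.cos x)^2))) / c) x :=
      ((hasDerivAt_id x).add (h4.const_mul 2)).div_const c
    convert h5 using 1
    have hd := hden x
    have hDx := hD x
    have hs := Real.sin_sq_add_cos_sq x
    have hpx := hpos x
    have keyx := key x
    have hu : 1 + (r * Real.sin x / (1 - r * Real.cos x))^2
        = (1 - 2*r*Real.cos x + r^2) / (1 - r * Real.cos x)^2 := by
      field_simp
      linear_combination (r^2) * hs
    have hN : r * Real.cos x * (1 - r * Real.cos x) - r * Real.sin x * (r * Real.sin x)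
        = r * Real.cos x - r^2 := by linear_combination (-r^2) * hs
    have e3 : 1 / ((1 - 2*r*Real.cos x + r^2) / (1 - r * Real.cos x)^2) *
        ((r * Real.cos x * (1 - r * Real.cos x) - r * Real.sin x * (r * Real.sin x)) / (1 - r * Real.cos x)^2)
        = (r * Real.cos x - r^2) / (1 - 2*r*Real.cos x + r^2) := by
      rw [hN]
      field_simp
    rw [hu, e3]
    rw [eq_div_iff hc.ne', inv_mul_eq_div, div_eq_iff hpx.ne']
    field_simp
    linear_combination -keyx
  have hcont : Continuous (fun x => (a + b * Real.cos x)⁻¹) := by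
    apply Continuous.inv₀
    · exact continuous_const.add (continuous_const.mul Real.continuous_cos)
    · exact fun x => (hpos x).ne'
  have hFTC := intervalIntegral.integral_eq_sub_of_hasDerivAt (f := fun y => (y + 2 * Real.arctan (r * Real.sin y / (1 - r * Real.cos y))) / c)
    (fun x _ => hF x) (hcont.intervalIntegrable 0 (2*π))
  rw [hFTC]
  simp [Real.sin_two_pi, Real.cos_two_pi, Real.arctan_zero]

theorem stmt_4 (ρ : ℝ) (hρ₁ : -1 < ρ) (hρ₂ : ρ < 1) (hρ₀ : ρ ≠ 0)
    (z : ℝ) (hz : (1 + |ρ|) ^ 2 < z) :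
    ∫ x, (z - x)⁻¹ ∂(muRho ρ)
      = 1 / Real.sqrt ((z - (1 - |ρ|) ^ 2) * (z - (1 + |ρ|) ^ 2)) := by
  have hπ : 0 < π := Real.pi_pos
  have hρa : 0 < |ρ| := abs_pos.mpr hρ₀
  rw [muRho, integral_map (by fun_prop) ((Measurable.aestronglyMeasurable (by fun_prop : Measurable fun x : ℝ => (z - x)⁻¹)))]
  rw [integral_smul_measure]
  have htr : ((ENNReal.ofReal (2 * π))⁻¹).toReal = (2*π)⁻¹ := by
    rw [ENNReal.toReal_inv, ENNReal.toReal_ofReal (by positivity)]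
  rw [htr, MeasureTheory.integral_Icc_eq_integral_Ioc,
    ← intervalIntegral.integral_of_le (by positivity : (0:ℝ) ≤ 2*π)]
  have hb : (2*ρ) ≠ 0 := by simpa using hρ₀
  have hab : |2*ρ| < z - 1 - ρ^2 := by
    rw [abs_mul, abs_two]
    nlinarith [sq_abs ρ]
  have heq : ∀ x : ℝ, (z - (1 + ρ^2 - 2*ρ*Real.cos x))⁻¹
      = ((z - 1 - ρ^2) + (2*ρ) * Real.cos x)⁻¹ := by intro x; ring_nf
  simp_rw [heq]
  rw [key_integral (z - 1 - ρ^2) (2*ρ) hb hab]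
  have hprod : (z - 1 - ρ^2)^2 - (2*ρ)^2 = (z - (1 - |ρ|)^2) * (z - (1 + |ρ|)^2) := by
    linear_combination (2*z - 2 - ρ^2 - |ρ|^2 + 4) * (sq_abs ρ)
  rw [hprod]
  rw [smul_eq_mul]
  field_simp
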